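/- arXiv:1401.2349 — 4 statements merged into one kernel-verified Lean document; each statement's English description precedes it below -/
import Mathlib

section
/- Under the same A-coupled-expansion hypotheses, if c = (c_0 c_1 … c_n) is an admissible word, then f(V_{c_0 c_1 … c_n}) = V_{c_1 … c_n}, where V_{c_0…c_n} = ⋂_{i=0}^{n} f^{-i}(V_{c_i}). -/
/-- The set V_{c_0 c_1 … c_n} = ⋂_{i=0}^{n} f^{-i}(V_{c_i}). -/
def Vword {X : Type*} {m : ℕ} (f : X → X) (V : Fin m → Set X)
    (c : ℕ → Fin m) (n : ℕ) : Set X :=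
  ⋂ i ∈ Finset.range (n + 1), f^[i] ⁻¹' V (c i)

/-- Under A-coupled-expansion, f(V_{c_0 c_1 … c_{n+1}}) = V_{c_1 … c_{n+1}}. -/
theorem image_Vword {X : Type*} [MetricSpace X] (m : ℕ) (hm : 2 ≤ m)
    (V : Fin m → Set X) (hVc : ∀ i, IsCompact (V i))
    (f : X → X) (hf : ContinuousOn f (⋃ i, V i))
    (A : Matrix (Fin m) (Fin m) ℕ) (hA01 : ∀ i j, A i j = 0 ∨ A i j = 1)
    (hce : ∀ i j, A i j = 1 → V j ⊆ f '' V i)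
    (n : ℕ) (c : ℕ → Fin m) (hadm : ∀ k < n + 1, A (c k) (c (k + 1)) = 1) :
    f '' Vword f V c (n + 1) = Vword f V (fun i => c (i + 1)) n := by
  ext y
  simp only [Vword, Set.mem_image, Set.mem_iInter, Finset.mem_range, Set.mem_preimage]
  constructor
  · rintro ⟨x, hx, rfl⟩
    intro i hi
    have := hx (i + 1) (by omega)
    simpa [Function.iterate_succ_apply] using this
  · intro hy
    have h1 : y ∈ V (c 1) := by simpa using hy 0 (by omega)
    obtain ⟨x, hx, hfx⟩ := hce (c 0) (c 1) (hadm 0 (by omega)) h1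
    refine ⟨x, ?_, hfx⟩
    intro i hi
    match i with
    | 0 => simpa using hx
    | Nat.succ j =>
      have := hy j (by omega)
      simpa [Function.iterate_succ_apply, hfx] using this
end

section
/- Suppose f is strictly A-coupled-expanding in compact sets V_1,…,V_m (i.e., additionally d(V_i, V_j) > 0 for i ≠ j). If (c_0 … c_n) and (d_0 … d_n) are two distinct admissible words for A of the same length, then V_{c_0…c_n} ∩ V_{d_0…d_n} = ∅. -/
/-- The set V_β = ⋂_{n=0}^{∞} f^{-n}(V_{b_n}). -/
def Vseq {X : Type*} {m : ℕ} (f : X → X) (V : Fin m → Set X)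
    (b : ℕ → Fin m) : Set X :=
  ⋂ n : ℕ, f^[n] ⁻¹' V (b n)

/-- Under strict A-coupled-expansion, two distinct admissible words of the
same length give disjoint sets V_c and V_d. -/
theorem Vword_disjoint {X : Type*} [MetricSpace X] (m : ℕ) (hm : 2 ≤ m)
    (V : Fin m → Set X) (hVc : ∀ i, IsCompact (V i))
    (f : X → X) (hf : ContinuousOn f (⋃ i, V i))
    (A : Matrix (Fin m) (Fin m) ℕ) (hA01 : ∀ i j, A i j = 0 ∨ A i j = 1)
    (hce : ∀ i j, A i j = 1 → V j ⊆ f '' V i)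
    (hsep : ∀ i j, i ≠ j → ∃ δ > 0, ∀ x ∈ V i, ∀ y ∈ V j, δ ≤ dist x y)
    (n : ℕ) (c d : ℕ → Fin m)
    (hc : ∀ k < n, A (c k) (c (k + 1)) = 1)
    (hd : ∀ k < n, A (d k) (d (k + 1)) = 1)
    (hne : ∃ k ≤ n, c k ≠ d k) :
    Vword f V c n ∩ Vword f V d n = ∅ := by
  ext x
  simp only [Set.mem_inter_iff, Set.mem_empty_iff_false, iff_false, Vword,
    Set.mem_iInter, Finset.mem_range, Set.mem_preimage]
  rintro ⟨hx1, hx2⟩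
  obtain ⟨k, hk, hkne⟩ := hne
  obtain ⟨δ, hδ, hsep'⟩ := hsep _ _ hkne
  have h1 := hx1 k (Nat.lt_succ_of_le hk)
  have h2 := hx2 k (Nat.lt_succ_of_le hk)
  have := hsep' _ h1 _ h2
  simp at this
  linarith
end

section
/- If A is an m×m irreducible transition matrix with some row i_0 satisfying ∑_j A_{i_0 j} ≥ 2, and a_0 ∈ {1,…,m}, then there exist an alphabet element a' with A_{a' a_0} = 1 and two distinct admissible words v_1 = (a_0 … a'), v_2 = (a_0 … a') for A of equal length, both starting at a_0 and ending at a'. -/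
/-- From positivity of an entry of `A ^ n`, extract an admissible word. -/
private lemma path_of_pow {m : ℕ} (A : Matrix (Fin m) (Fin m) ℕ)
    (hA01 : ∀ i j, A i j = 0 ∨ A i j = 1) :
    ∀ (n : ℕ) (x y : Fin m), 0 < (A ^ n) x y →
      ∃ c : ℕ → Fin m, c 0 = x ∧ c n = y ∧ ∀ k < n, A (c k) (c (k + 1)) = 1 := by
  intro n
  induction n with
  | zero =>
    intro x y h
    have hxy : x = y := by
      by_contra hne
      simp [Matrix.one_apply, hne] at h
    exact ⟨fun _ => x, rfl, hxy, fun k hk => by omega⟩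
  | succ n ih =>
    intro x y h
    rw [pow_succ] at h
    have hsum : 0 < ∑ z, (A ^ n) x z * A z y := h
    have hex : ∃ z, 0 < (A ^ n) x z * A z y := by
      by_contra hc
      push_neg at hc
      have : ∑ z, (A ^ n) x z * A z y = 0 :=
        Finset.sum_eq_zero fun z _ => Nat.le_zero.mp (hc z)
      omega
    obtain ⟨z, hz⟩ := hex
    have h1 : 0 < (A ^ n) x z := Nat.pos_of_mul_pos_left (by rwa [mul_comm] at hz)
    have h2 : 0 < A z y := Nat.pos_of_mul_pos_left hz
    have h2' : A z y = 1 := by rcases hA01 z y with h | h <;> omega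
    obtain ⟨c, hc0, hcn, hcadm⟩ := ih x z h1
    refine ⟨fun k => if k ≤ n then c k else y, by simpa using hc0, by simp, ?_⟩
    intro k hk
    rcases Nat.lt_or_ge k n with hkn | hkn
    · simpa [Nat.le_of_lt hkn, Nat.succ_le_of_lt hkn] using hcadm k hkn
    · have hk' : k = n := by omega
      subst hk'
      simp [hcn, h2']

/-- Concatenation of admissible words, with evaluation laws. -/
private lemma concat_words {m : ℕ} (A : Matrix (Fin m) (Fin m) ℕ)
    {p q : ℕ} {c₁ c₂ : ℕ → Fin m}
    (hy : c₁ p = c₂ 0)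
    (h₁ : ∀ k < p, A (c₁ k) (c₁ (k + 1)) = 1)
    (h₂ : ∀ k < q, A (c₂ k) (c₂ (k + 1)) = 1) :
    ∃ c : ℕ → Fin m, (∀ k ≤ p, c k = c₁ k) ∧ (∀ k, c (p + k) = c₂ k) ∧
      ∀ k < p + q, A (c k) (c (k + 1)) = 1 := by
  refine ⟨fun k => if k ≤ p then c₁ k else c₂ (k - p), ?_, ?_, ?_⟩
  · intro k hk; simp [hk]
  · intro k
    rcases Nat.eq_zero_or_pos k with rfl | hk
    · simpa using hy
    · have : ¬ (p + k ≤ p) := by omega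
      simp [this]
  · intro k hk
    rcases Nat.lt_or_ge k p with hkp | hkp
    · simpa [Nat.le_of_lt hkp, Nat.succ_le_of_lt hkp] using h₁ k hkp
    · have hk1 : ¬ (k + 1 ≤ p) := by omega
      have hstep := h₂ (k - p) (by omega)
      rcases Nat.eq_or_lt_of_le hkp with heq | hkp'
      · have hkle : k ≤ p := Nat.le_of_eq heq.symm
        have e : k + 1 - p = 1 := by omega
        have hy' : c₁ k = c₂ 0 := heq ▸ hy
        simpa [hkle, hk1, e, hy'] using h₂ 0 (by omega)
      · have hknle : ¬ (k ≤ p) := by omega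
        have e1 : k + 1 - p = k - p + 1 := by omega
        simpa [hknle, hk1, e1] using hstep

/-- If A is an irreducible m×m transition matrix with some row summing to at
least 2, then for any letter a₀ there are a letter a' with A_{a' a₀} = 1 and
two distinct admissible words of equal length from a₀ to a'. -/
theorem two_distinct_admissible_words (m : ℕ) (hm : 2 ≤ m)
    (A : Matrix (Fin m) (Fin m) ℕ)
    (hA01 : ∀ i j, A i j = 0 ∨ A i j = 1)
    (hirr : ∀ i j, ∃ n, 1 ≤ n ∧ 0 < (A ^ n) i j)
    (hrow : ∃ i₀, 2 ≤ ∑ j, A i₀ j)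
    (a₀ : Fin m) :
    ∃ (a' : Fin m) (l : ℕ) (v₁ v₂ : ℕ → Fin m),
      A a' a₀ = 1 ∧ 1 ≤ l ∧
      v₁ 0 = a₀ ∧ v₂ 0 = a₀ ∧ v₁ l = a' ∧ v₂ l = a' ∧
      (∀ k < l, A (v₁ k) (v₁ (k + 1)) = 1) ∧
      (∀ k < l, A (v₂ k) (v₂ (k + 1)) = 1) ∧
      (∃ k ≤ l, v₁ k ≠ v₂ k) := by
  obtain ⟨i₀, hi₀⟩ := hrow
  -- two distinct successors of i₀
  have hcard : 2 ≤ (Finset.univ.filter (fun j => A i₀ j = 1)).card := by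
    have : ∑ j, A i₀ j = (Finset.univ.filter (fun j => A i₀ j = 1)).card := by
      rw [Finset.card_filter]
      exact Finset.sum_congr rfl fun j _ => by rcases hA01 i₀ j with h | h <;> simp [h]
    omega
  obtain ⟨j₁, hj₁mem, j₂, hj₂mem, hne⟩ := Finset.one_lt_card.mp (lt_of_lt_of_le one_lt_two hcard)
  have hj₁ : A i₀ j₁ = 1 := (Finset.mem_filter.mp hj₁mem).2
  have hj₂ : A i₀ j₂ = 1 := (Finset.mem_filter.mp hj₂mem).2
  -- paths
  obtain ⟨nS, _, hnSpos⟩ := hirr a₀ i₀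
  obtain ⟨S, hS0, hSn, hSadm⟩ := path_of_pow A hA01 nS a₀ i₀ hnSpos
  obtain ⟨n₁, _, hn₁pos⟩ := hirr j₁ i₀
  obtain ⟨P₁, hP₁0, hP₁n, hP₁adm⟩ := path_of_pow A hA01 n₁ j₁ i₀ hn₁pos
  obtain ⟨n₂, _, hn₂pos⟩ := hirr j₂ i₀
  obtain ⟨P₂, hP₂0, hP₂n, hP₂adm⟩ := path_of_pow A hA01 n₂ j₂ i₀ hn₂pos
  obtain ⟨nT, hnT1, hnTpos⟩ := hirr i₀ a₀
  obtain ⟨T, hT0, hTn, hTadm⟩ := path_of_pow A hA01 nT i₀ a₀ hnTpos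
  -- edge words
  set E₁ : ℕ → Fin m := fun k => if k = 0 then i₀ else j₁ with hE₁def
  set E₂ : ℕ → Fin m := fun k => if k = 0 then i₀ else j₂ with hE₂def
  have hE₁adm : ∀ k < 1, A (E₁ k) (E₁ (k + 1)) = 1 := by
    intro k hk
    have : k = 0 := by omega
    simp [this, hE₁def, hj₁]
  have hE₂adm : ∀ k < 1, A (E₂ k) (E₂ (k + 1)) = 1 := by
    intro k hk
    have : k = 0 := by omega
    simp [this, hE₂def, hj₂]
  -- build word 1 : S · E₁ · P₁ · E₂ · P₂ · T
  obtain ⟨R₅, R₅le, R₅sh, R₅adm⟩ :=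
    concat_words A (p := n₂) (q := nT) (c₁ := P₂) (c₂ := T) (by rw [hP₂n, hT0]) hP₂adm hTadm
  obtain ⟨R₄, R₄le, R₄sh, R₄adm⟩ :=
    concat_words A (p := 1) (q := n₂ + nT) (c₁ := E₂) (c₂ := R₅)
      (by rw [R₅le 0 (Nat.zero_le _), hP₂0]; simp [hE₂def]) hE₂adm R₅adm
  obtain ⟨R₃, R₃le, R₃sh, R₃adm⟩ :=
    concat_words A (p := n₁) (q := 1 + (n₂ + nT)) (c₁ := P₁) (c₂ := R₄)
      (by rw [R₄le 0 (Nat.zero_le _), hP₁n]; simp [hE₂def]) hP₁adm R₄adm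
  obtain ⟨R₂, R₂le, R₂sh, R₂adm⟩ :=
    concat_words A (p := 1) (q := n₁ + (1 + (n₂ + nT))) (c₁ := E₁) (c₂ := R₃)
      (by rw [R₃le 0 (Nat.zero_le _), hP₁0]; simp [hE₁def]) hE₁adm R₃adm
  obtain ⟨W₁, W₁le, W₁sh, W₁adm⟩ :=
    concat_words A (p := nS) (q := 1 + (n₁ + (1 + (n₂ + nT)))) (c₁ := S) (c₂ := R₂)
      (by rw [R₂le 0 (Nat.zero_le _), hSn]; simp [hE₁def]) hSadm R₂adm
  -- build word 2 : S · E₂ · P₂ · E₁ · P₁ · T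
  obtain ⟨Q₅, Q₅le, Q₅sh, Q₅adm⟩ :=
    concat_words A (p := n₁) (q := nT) (c₁ := P₁) (c₂ := T) (by rw [hP₁n, hT0]) hP₁adm hTadm
  obtain ⟨Q₄, Q₄le, Q₄sh, Q₄adm⟩ :=
    concat_words A (p := 1) (q := n₁ + nT) (c₁ := E₁) (c₂ := Q₅)
      (by rw [Q₅le 0 (Nat.zero_le _), hP₁0]; simp [hE₁def]) hE₁adm Q₅adm
  obtain ⟨Q₃, Q₃le, Q₃sh, Q₃adm⟩ :=
    concat_words A (p := n₂) (q := 1 + (n₁ + nT)) (c₁ := P₂) (c₂ := Q₄)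
      (by rw [Q₄le 0 (Nat.zero_le _), hP₂n]; simp [hE₁def]) hP₂adm Q₄adm
  obtain ⟨Q₂, Q₂le, Q₂sh, Q₂adm⟩ :=
    concat_words A (p := 1) (q := n₂ + (1 + (n₁ + nT))) (c₁ := E₂) (c₂ := Q₃)
      (by rw [Q₃le 0 (Nat.zero_le _), hP₂0]; simp [hE₂def]) hE₂adm Q₃adm
  obtain ⟨W₂, W₂le, W₂sh, W₂adm⟩ :=
    concat_words A (p := nS) (q := 1 + (n₂ + (1 + (n₁ + nT)))) (c₁ := S) (c₂ := Q₂)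
      (by rw [Q₂le 0 (Nat.zero_le _), hSn]; simp [hE₂def]) hSadm Q₂adm
  -- key quantities
  set L : ℕ := nS + 1 + n₁ + 1 + n₂ + nT with hLdef
  set l : ℕ := L - 1 with hldef
  set a' : Fin m := T (nT - 1) with ha'def
  -- values of W₁
  have hW₁0 : W₁ 0 = a₀ := by rw [W₁le 0 (Nat.zero_le _), hS0]
  have hW₁j : W₁ (nS + 1) = j₁ := by
    rw [W₁sh 1, R₂le 1 le_rfl]; simp [hE₁def]
  have hW₁l : W₁ l = a' := by
    have e1 : l = nS + (1 + (n₁ + (1 + (n₂ + (nT - 1))))) := by omega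
    rw [e1, W₁sh, R₂sh, R₃sh, R₄sh, R₅sh]
  have hW₁L : W₁ L = a₀ := by
    have e2 : L = nS + (1 + (n₁ + (1 + (n₂ + nT)))) := by omega
    rw [e2, W₁sh, R₂sh, R₃sh, R₄sh, R₅sh, hTn]
  -- values of W₂
  have hW₂0 : W₂ 0 = a₀ := by rw [W₂le 0 (Nat.zero_le _), hS0]
  have hW₂j : W₂ (nS + 1) = j₂ := by
    rw [W₂sh 1, Q₂le 1 le_rfl]; simp [hE₂def]
  have hW₂l : W₂ l = a' := by
    have e1 : l = nS + (1 + (n₂ + (1 + (n₁ + (nT - 1))))) := by omega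
    rw [e1, W₂sh, Q₂sh, Q₃sh, Q₄sh, Q₅sh]
  -- A a' a₀ = 1
  have hstep : A a' a₀ = 1 := by
    have h := W₁adm l (by omega)
    have hl1 : l + 1 = L := by omega
    rwa [hW₁l, hl1, hW₁L] at h
  refine ⟨a', l, W₁, W₂, hstep, by omega, hW₁0, hW₂0, hW₁l, hW₂l, ?_, ?_, ?_⟩
  · intro k hk; exact W₁adm k (by omega)
  · intro k hk; exact W₂adm k (by omega)
  · exact ⟨nS + 1, by omega, by rw [hW₁j, hW₂j]; exact hne⟩
end

section
/- Distributional chaos of type 1 implies distributional chaos in a sequence: if f : X → X on a compact metric space has an uncountable set D such that every pair (x,y) of distinct points of D satisfies F*_{xy} ≡ 1 and F_{xy}(s) = 0 for some s > 0, then there exists an increasing sequence (p_k) of positive integers and an uncountable set D' such that every pair of distinct points of D' is distributionally chaotic with respect to (p_k). -/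
open Filter Topology Finset

/-!
Take `p k = k + 1` and `D' = D`. Counting the times `k ∈ [1, n]` at which `f^[k+1] x` and
`f^[k+1] y` are close amounts to counting the times `i < n` at which `f^[i+2] x` and
`f^[i+2] y` are close, and shifting the window by two changes that count by at most `2`.
So the two densities differ by at most `2 / n`, which changes neither their `limsup` nor
their `liminf`.
-/

section

variable {ι α : Type*} [AddCommGroup α] [ConditionallyCompleteLinearOrder α] [DenselyOrdered α]
  [AddLeftMono α] [TopologicalSpace α] [OrderTopology α] {l : Filter ι} [l.NeBot] {u v : ι → α}

theorem limsup_eq_of_tendsto_sub_nhds_zero (hle : IsBoundedUnder (· ≤ ·) l v)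
    (hge : IsBoundedUnder (· ≥ ·) l v) (h : Tendsto (u - v) l (𝓝 0)) :
    limsup u l = limsup v l := by
  have huv : u = v + (u - v) := (add_sub_cancel v u).symm
  apply le_antisymm
  · calc limsup u l = limsup (v + (u - v)) l := by rw [← huv]
      _ ≤ limsup v l + limsup (u - v) l :=
          limsup_add_le hge hle h.isCoboundedUnder_le h.isBoundedUnder_le
      _ = limsup v l := by rw [h.limsup_eq, add_zero]
  · calc limsup v l = limsup v l + liminf (u - v) l := by rw [h.liminf_eq, add_zero]
      _ ≤ limsup (v + (u - v)) l :=
          le_limsup_add hle hge.isCoboundedUnder_le h.isBoundedUnder_le h.isBoundedUnder_ge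
      _ = limsup u l := by rw [← huv]

theorem liminf_eq_of_tendsto_sub_nhds_zero (hle : IsBoundedUnder (· ≤ ·) l v)
    (hge : IsBoundedUnder (· ≥ ·) l v) (h : Tendsto (u - v) l (𝓝 0)) :
    liminf u l = liminf v l := by
  have huv : u = (u - v) + v := (sub_add_cancel u v).symm
  apply le_antisymm
  · calc liminf u l = liminf ((u - v) + v) l := by rw [← huv]
      _ ≤ limsup (u - v) l + liminf v l :=
          liminf_add_le h.isBoundedUnder_ge h.isBoundedUnder_le hge hle.isCoboundedUnder_ge
      _ = liminf v l := by rw [h.limsup_eq, zero_add]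
  · calc liminf v l = liminf (u - v) l + liminf v l := by rw [h.liminf_eq, zero_add]
      _ ≤ liminf ((u - v) + v) l :=
          le_liminf_add h.isBoundedUnder_ge h.isBoundedUnder_le hge hle.isCoboundedUnder_ge
      _ = liminf u l := by rw [← huv]

end

namespace Nat

variable (P : ℕ → Prop) [DecidablePred P]

theorem card_filter_Icc_one_eq_count (n : ℕ) :
    #{k ∈ Icc 1 n | P k} = count (fun k => P (k + 1)) n := by
  have hIcc : Icc 1 n = (range n).map (addRightEmbedding 1) := by
    rw [range_eq_Ico, map_add_right_Ico]; rfl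
  rw [hIcc, filter_map, card_map, count_eq_card_filter_range]
  rfl

theorem abs_count_add_sub_count_le (m n : ℕ) :
    |(count (fun k => P (k + m)) n : ℝ) - count P n| ≤ m := by
  have h : (count (fun k => P (k + m)) n : ℝ) + count P m
      = count P n + count (fun k => P (n + k)) m :=
    mod_cast (count_add' P n m).symm.trans (count_add P n m)
  have h₁ : (count P m : ℝ) ≤ m := mod_cast count_le P
  have h₂ : (count (fun k => P (n + k)) m : ℝ) ≤ m := mod_cast count_le _
  rw [abs_sub_le_iff]
  constructor <;> linarith [(count P m).cast_nonneg (α := ℝ),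
    (count (fun k => P (n + k)) m).cast_nonneg (α := ℝ)]

theorem tendsto_count_add_div_sub_count_div (m : ℕ) :
    Tendsto (fun n : ℕ => (count (fun k => P (k + m)) n : ℝ) / n - count P n / n) atTop (𝓝 0) := by
  have hbound (n : ℕ) : |(count (fun k => P (k + m)) n : ℝ) / n - count P n / n| ≤ m / n := by
    rw [← sub_div, abs_div, Nat.abs_cast]
    exact div_le_div_of_nonneg_right (abs_count_add_sub_count_le P m n) n.cast_nonneg
  exact squeeze_zero_norm hbound (tendsto_const_div_atTop_nhds_zero_nat (m : ℝ))

theorem count_div_mem_Icc (n : ℕ) : (count P n : ℝ) / n ∈ Set.Icc 0 1 :=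
  ⟨by positivity, div_le_one_of_le₀ (mod_cast count_le P) n.cast_nonneg⟩

theorem limsup_count_add_div (m : ℕ) :
    limsup (fun n : ℕ => (count (fun k => P (k + m)) n : ℝ) / n) atTop
      = limsup (fun n : ℕ => (count P n : ℝ) / n) atTop :=
  limsup_eq_of_tendsto_sub_nhds_zero (isBoundedUnder_of ⟨1, fun n => (count_div_mem_Icc P n).2⟩)
    (isBoundedUnder_of ⟨0, fun n => (count_div_mem_Icc P n).1⟩)
    (tendsto_count_add_div_sub_count_div P m)

theorem liminf_count_add_div (m : ℕ) :
    liminf (fun n : ℕ => (count (fun k => P (k + m)) n : ℝ) / n) atTop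
      = liminf (fun n : ℕ => (count P n : ℝ) / n) atTop :=
  liminf_eq_of_tendsto_sub_nhds_zero (isBoundedUnder_of ⟨1, fun n => (count_div_mem_Icc P n).2⟩)
    (isBoundedUnder_of ⟨0, fun n => (count_div_mem_Icc P n).1⟩)
    (tendsto_count_add_div_sub_count_div P m)

end Nat

theorem dc1_implies_dc_in_sequence_general {X : Type*} [MetricSpace X]
    (f : X → X) (D : Set X) (hD : ¬ D.Countable)
    (hpairs : ∀ x ∈ D, ∀ y ∈ D, x ≠ y →
      (∀ t > 0, limsup (fun n : ℕ =>
          (((Finset.range n).filter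
            (fun i => dist (f^[i] x) (f^[i] y) < t)).card : ℝ) / n) atTop = 1) ∧
      (∃ s > 0, liminf (fun n : ℕ =>
          (((Finset.range n).filter
            (fun i => dist (f^[i] x) (f^[i] y) < s)).card : ℝ) / n) atTop = 0)) :
    ∃ p : ℕ → ℕ, StrictMono p ∧ (∀ k, 0 < p k) ∧
      ∃ D' : Set X, ¬ D'.Countable ∧
        ∀ x ∈ D', ∀ y ∈ D', x ≠ y →
          (∀ t > 0, limsup (fun n : ℕ =>
              (((Finset.Icc 1 n).filter
                (fun k => dist (f^[p k] x) (f^[p k] y) < t)).card : ℝ) / n)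
              atTop = 1) ∧
          (∃ ε > 0, liminf (fun n : ℕ =>
              (((Finset.Icc 1 n).filter
                (fun k => dist (f^[p k] x) (f^[p k] y) < ε)).card : ℝ) / n)
              atTop = 0) := by
  refine ⟨(· + 1), strictMono_id.add_const 1, Nat.succ_pos, D, hD, fun x hx y hy hxy => ?_⟩
  obtain ⟨hsup, s, hs, hinf⟩ := hpairs x hx y hy hxy
  simp only [← Nat.count_eq_card_filter_range] at hsup hinf
  simp only [Nat.card_filter_Icc_one_eq_count]
  exact ⟨fun t ht => (Nat.limsup_count_add_div (fun i => dist (f^[i] x) (f^[i] y) < t) 2).trans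
      (hsup t ht),
    ⟨s, hs, (Nat.liminf_count_add_div (fun i => dist (f^[i] x) (f^[i] y) < s) 2).trans hinf⟩⟩

/-- Distributional chaos of type 1 implies distributional chaos in a sequence. -/
theorem dc1_implies_dc_in_sequence {X : Type*} [MetricSpace X] [CompactSpace X]
    (f : X → X) (hf : Continuous f) (D : Set X) (hD : ¬ D.Countable)
    (hpairs : ∀ x ∈ D, ∀ y ∈ D, x ≠ y →
      (∀ t > 0, limsup (fun n : ℕ =>
          (((Finset.range n).filter
            (fun i => dist (f^[i] x) (f^[i] y) < t)).card : ℝ) / n) atTop = 1) ∧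
      (∃ s > 0, liminf (fun n : ℕ =>
          (((Finset.range n).filter
            (fun i => dist (f^[i] x) (f^[i] y) < s)).card : ℝ) / n) atTop = 0)) :
    ∃ p : ℕ → ℕ, StrictMono p ∧ (∀ k, 0 < p k) ∧
      ∃ D' : Set X, ¬ D'.Countable ∧
        ∀ x ∈ D', ∀ y ∈ D', x ≠ y →
          (∀ t > 0, limsup (fun n : ℕ =>
              (((Finset.Icc 1 n).filter
                (fun k => dist (f^[p k] x) (f^[p k] y) < t)).card : ℝ) / n)
              atTop = 1) ∧
          (∃ ε > 0, liminf (fun n : ℕ =>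
              (((Finset.Icc 1 n).filter
                (fun k => dist (f^[p k] x) (f^[p k] y) < ε)).card : ℝ) / n)
              atTop = 0) :=
  dc1_implies_dc_in_sequence_general f D hD hpairs
end
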